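/- Let P and Q be morphisms V_n ⇉ V_n (Lagrangian subspaces of V_n ⊕ V_n of dimension 2n on which H_{n,n} is strictly positive definite). If P is an idempotent for composition of linear relations (PP = P), then the product QP is also an idempotent: (QP)(QP) = QP. -/
import Mathlib


open Matrix

noncomputable section

/-- `V_n = ℂⁿ ⊕ ℂⁿ`, with coordinates `(v⁺, v⁻)`. -/
abbrev Vsp (n : ℕ) := (Fin n → ℂ) × (Fin n → ℂ)

/-- The skew-symmetric bilinear form
`L_n((v⁺,v⁻),(w⁺,w⁻)) = Σ_j (v⁺_j w⁻_j − v⁻_j w⁺_j)`. -/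
def Lf {n : ℕ} (v w : Vsp n) : ℂ := ∑ j, (v.1 j * w.2 j - v.2 j * w.1 j)

/-- The Hermitian form
`H_n((v⁺,v⁻),(w⁺,w⁻)) = (1/i) Σ_j (v⁺_j conj(w⁻_j) − v⁻_j conj(w⁺_j))`. -/
def Hf {n : ℕ} (v w : Vsp n) : ℂ :=
  (1 / Complex.I) * ∑ j, (v.1 j * (starRingEnd ℂ) (w.2 j) - v.2 j * (starRingEnd ℂ) (w.1 j))

/-- `L_{m,n}((v,w),(v′,w′)) = L_m(v,v′) − L_n(w,w′)` on `V_m ⊕ V_n`. -/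
def Lmn {m n : ℕ} (v w : Vsp m × Vsp n) : ℂ := Lf v.1 w.1 - Lf v.2 w.2

/-- `H_{m,n}((v,w),(v′,w′)) = H_m(v,v′) − H_n(w,w′)` on `V_m ⊕ V_n`. -/
def Hmn {m n : ℕ} (v w : Vsp m × Vsp n) : ℂ := Hf v.1 w.1 - Hf v.2 w.2

/-- A morphism `V_m ⇉ V_n`: a complex subspace `P ⊆ V_m ⊕ V_n` of dimension `m+n`
on which `L_{m,n}` vanishes identically and `H_{m,n}` is strictly positive definite. -/
def IsMorphism {m n : ℕ} (P : Submodule ℂ (Vsp m × Vsp n)) : Prop :=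
  Module.finrank ℂ P = m + n ∧
  (∀ p ∈ P, ∀ q ∈ P, Lmn p q = 0) ∧
  (∀ p ∈ P, p ≠ 0 → 0 < (Hmn p p).re)

/-- The product (composition) of linear relations:
`QP = {(v, y) : ∃ w, (v, w) ∈ P ∧ (w, y) ∈ Q}`. -/
def relComp {α β γ : Type*} [AddCommGroup α] [Module ℂ α] [AddCommGroup β] [Module ℂ β]
    [AddCommGroup γ] [Module ℂ γ]
    (P : Submodule ℂ (α × β)) (Q : Submodule ℂ (β × γ)) : Submodule ℂ (α × γ) where
  carrier := {x | ∃ w : β, (x.1, w) ∈ P ∧ (w, x.2) ∈ Q}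
  add_mem' := by
    rintro ⟨a, c⟩ ⟨a', c'⟩ ⟨w, hP, hQ⟩ ⟨w', hP', hQ'⟩
    exact ⟨w + w', P.add_mem hP hP', Q.add_mem hQ hQ'⟩
  zero_mem' := ⟨0, P.zero_mem, Q.zero_mem⟩
  smul_mem' := by
    rintro c ⟨a, b⟩ ⟨w, hP, hQ⟩
    exact ⟨c • w, P.smul_mem c hP, Q.smul_mem c hQ⟩

set_option maxHeartbeats 1000000

namespace Stmt18

def gg {n : ℕ} (a : Vsp n) : ℝ := (Hf a a).re

lemma Hf_smul_smul {n : ℕ} (c : ℂ) (a : Vsp n) :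
    Hf (c • a) (c • a) = c * (starRingEnd ℂ) c * Hf a a := by
  unfold Hf
  rw [Finset.mul_sum, Finset.mul_sum, Finset.mul_sum]
  apply Finset.sum_congr rfl
  intro j _
  simp only [Prod.smul_fst, Prod.smul_snd, Pi.smul_apply, smul_eq_mul, _root_.map_mul]
  ring

lemma gg_smul {n : ℕ} (c : ℂ) (a : Vsp n) : gg (c • a) = Complex.normSq c * gg a := by
  unfold gg
  rw [Hf_smul_smul, Complex.mul_conj]
  simp [Complex.re_ofReal_mul]

def gA {n : ℕ} (x : Vsp n × Vsp n) : ℝ := gg x.1 - gg x.2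

lemma gA_eq {n : ℕ} (x : Vsp n × Vsp n) : gA x = (Hmn x x).re := by
  simp [Hmn, gA, gg, Complex.sub_re]

lemma gA_smul {n : ℕ} (c : ℂ) (x : Vsp n × Vsp n) :
    gA (c • x) = Complex.normSq c * gA x := by
  simp only [gA, Prod.smul_fst, Prod.smul_snd, gg_smul]; ring

lemma gA_zero {n : ℕ} : gA (0 : Vsp n × Vsp n) = 0 := by
  simp [gA, gg, Hf]

lemma continuous_gg {n : ℕ} : Continuous (gg (n := n)) := by
  unfold gg Hf
  simp only [starRingEnd_apply]
  fun_prop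

lemma continuous_gA {n : ℕ} : Continuous (gA (n := n)) :=
  (continuous_gg.comp continuous_fst).sub (continuous_gg.comp continuous_snd)

variable {n : ℕ}

lemma gA_nonneg {P : Submodule ℂ (Vsp n × Vsp n)}
    (hpos : ∀ p ∈ P, p ≠ 0 → 0 < (Hmn p p).re) : ∀ x ∈ P, 0 ≤ gA x := by
  intro x hx
  rcases eq_or_ne x 0 with h | h
  · simp [h, gA_zero]
  · rw [gA_eq]; exact (hpos x hx h).le

lemma gA_eq_zero {P : Submodule ℂ (Vsp n × Vsp n)}
    (hpos : ∀ p ∈ P, p ≠ 0 → 0 < (Hmn p p).re) : ∀ x ∈ P, gA x = 0 → x = 0 := by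
  intro x hx h
  by_contra hne
  have := hpos x hx hne
  rw [← gA_eq, h] at this
  exact lt_irrefl _ this

lemma coercive (P : Submodule ℂ (Vsp n × Vsp n))
    (hpos : ∀ p ∈ P, p ≠ 0 → 0 < (Hmn p p).re) :
    ∃ ε > (0:ℝ), ∀ y ∈ P, ε * ‖y‖ ^ 2 ≤ gA y := by
  set S : Set (Vsp n × Vsp n) := (P : Set _) ∩ Metric.sphere 0 1 with hSdef
  have hunit : ∀ y ∈ P, y ≠ 0 → ((‖y‖⁻¹ : ℝ) : ℂ) • y ∈ S := by
    intro y hy hne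
    have hn : ‖y‖ ≠ 0 := norm_ne_zero_iff.2 hne
    refine ⟨P.smul_mem _ hy, ?_⟩
    simp only [Metric.mem_sphere, dist_zero_right, norm_smul, Complex.norm_real,
      norm_inv, Real.norm_eq_abs, abs_norm]
    field_simp
  rcases S.eq_empty_or_nonempty with hS | hS
  · refine ⟨1, one_pos, fun y hy => ?_⟩
    have hy0 : y = 0 := by
      by_contra h
      have := hunit y hy h
      rw [hS] at this
      exact this
    simp [hy0, gA_zero]
  · have hclosed : IsClosed S := P.closed_of_finiteDimensional.inter Metric.isClosed_sphere
    have hbdd : Bornology.IsBounded S :=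
      (Metric.isBounded_closedBall (x := (0 : Vsp n × Vsp n)) (r := 1)).subset
        (Set.inter_subset_right.trans Metric.sphere_subset_closedBall)
    have hcpt : IsCompact S := Metric.isCompact_of_isClosed_isBounded hclosed hbdd
    obtain ⟨y0, hy0S, hy0min⟩ := hcpt.exists_isMinOn hS continuous_gA.continuousOn
    have hy0ne : y0 ≠ 0 := by
      intro h
      have : ‖y0‖ = 1 := by simpa [dist_zero_right] using hy0S.2
      rw [h] at this; simp at this
    have hε : 0 < gA y0 := by rw [gA_eq]; exact hpos y0 hy0S.1 hy0ne
    refine ⟨gA y0, hε, fun y hy => ?_⟩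
    rcases eq_or_ne y 0 with h | h
    · simp [h, gA_zero]
    · have hn : (0:ℝ) < ‖y‖ := norm_pos_iff.2 h
      have h1 : gA y0 ≤ gA (((‖y‖⁻¹ : ℝ) : ℂ) • y) := hy0min (hunit y hy h)
      rw [gA_smul, Complex.normSq_ofReal] at h1
      have h2 : gA y0 * ‖y‖ ^ 2 ≤ (‖y‖⁻¹ * ‖y‖⁻¹ * gA y) * ‖y‖ ^ 2 :=
        mul_le_mul_of_nonneg_right h1 (sq_nonneg _)
      have h3 : (‖y‖⁻¹ * ‖y‖⁻¹ * gA y) * ‖y‖ ^ 2 = gA y := by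
        rw [show (‖y‖⁻¹ * ‖y‖⁻¹ * gA y) * ‖y‖ ^ 2
            = (‖y‖⁻¹ * ‖y‖) * (‖y‖⁻¹ * ‖y‖) * gA y by ring,
          inv_mul_cancel₀ hn.ne', one_mul, one_mul]
      rw [h3] at h2
      exact h2


/-- The auxiliary submodule of pairs `(x, y)` with `x, y ∈ P`, `y.2 = x.2` and
`(x.1, y.1) ∈ P`. -/
def MM (P : Submodule ℂ (Vsp n × Vsp n)) :
    Submodule ℂ ((Vsp n × Vsp n) × (Vsp n × Vsp n)) where
  carrier := {xy | xy.1 ∈ P ∧ xy.2 ∈ P ∧ xy.2.2 = xy.1.2 ∧ (xy.1.1, xy.2.1) ∈ P}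
  add_mem' := by
    rintro x y ⟨h1, h2, h3, h4⟩ ⟨h1', h2', h3', h4'⟩
    refine ⟨P.add_mem h1 h1', P.add_mem h2 h2', ?_, ?_⟩
    · show x.2.2 + y.2.2 = x.1.2 + y.1.2
      rw [h3, h3']
    · show (x.1.1 + y.1.1, x.2.1 + y.2.1) ∈ P
      exact P.add_mem h4 h4'
  zero_mem' := ⟨P.zero_mem, P.zero_mem, rfl, P.zero_mem⟩
  smul_mem' := by
    rintro c x ⟨h1, h2, h3, h4⟩
    refine ⟨P.smul_mem c h1, P.smul_mem c h2, ?_, ?_⟩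
    · show c • x.2.2 = c • x.1.2
      rw [h3]
    · show (c • x.1.1, c • x.2.1) ∈ P
      exact P.smul_mem c h4

theorem key (P : Submodule ℂ (Vsp n × Vsp n))
    (hpos : ∀ p ∈ P, p ≠ 0 → 0 < (Hmn p p).re)
    (hsub : ∀ x ∈ P, ∃ u, (x.1, u) ∈ P ∧ (u, x.2) ∈ P) :
    ∀ x ∈ P, ((0 : Vsp n), x.2) ∈ P := by
  classical
  -- the forward map `MM P → P`, first projection
  set f : MM P →ₗ[ℂ] P :=
    LinearMap.codRestrict P ((LinearMap.fst ℂ _ _).comp (MM P).subtype)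
      (fun m => m.2.1) with hf_def
  have hf_surj : Function.Surjective f := by
    rintro ⟨x, hx⟩
    obtain ⟨u, hu1, hu2⟩ := hsub x hx
    refine ⟨⟨(x, (u, x.2)), ⟨hx, hu2, rfl, hu1⟩⟩, ?_⟩
    apply Subtype.ext
    rfl
  obtain ⟨s, hs⟩ := f.exists_rightInverse_of_surjective (LinearMap.range_eq_top.2 hf_surj)
  obtain ⟨P', hPc⟩ := Submodule.exists_isCompl P
  set pr : (Vsp n × Vsp n) →ₗ[ℂ] P := P.linearProjOfIsCompl P' hPc with hpr_def
  set B : (Vsp n × Vsp n) →ₗ[ℂ] (Vsp n × Vsp n) :=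
    (LinearMap.snd ℂ _ _).comp ((MM P).subtype.comp (s.comp pr)) with hB_def
  have hB : ∀ x, ∀ hx : x ∈ P,
      B x ∈ P ∧ (B x).2 = x.2 ∧ (x.1, (B x).1) ∈ P := by
    intro x hx
    have h1 : pr x = ⟨x, hx⟩ :=
      Submodule.linearProjOfIsCompl_apply_left hPc ⟨x, hx⟩
    have h2 : f (s (pr x)) = pr x := by
      rw [← LinearMap.comp_apply, hs]
      rfl
    set m := s (pr x) with hm
    have hval : (m : (Vsp n × Vsp n) × (Vsp n × Vsp n)).1 = x := by
      have := congrArg Subtype.val h2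
      rw [h1] at this
      exact this
    obtain ⟨q1, q2, q3, q4⟩ := m.2
    have hBx : B x = (m : (Vsp n × Vsp n) × (Vsp n × Vsp n)).2 := rfl
    refine ⟨hBx ▸ q2, ?_, ?_⟩
    · rw [hBx, q3, hval]
    · rw [hBx, ← hval]
      exact q4
  -- the decrease identity
  have hdiff : ∀ x, ∀ hx : x ∈ P, gA x - gA (B x) = gA (x.1, (B x).1) := by
    intro x hx
    obtain ⟨-, h2, -⟩ := hB x hx
    simp only [gA, h2]
    ring
  have hle : ∀ x ∈ P, gA (B x) ≤ gA x := by
    intro x hx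
    have h0 := gA_nonneg hpos _ (hB x hx).2.2
    have := hdiff x hx
    linarith
  intro x hx
  set seq : ℕ → Vsp n × Vsp n := fun m => B^[m] x with hseq_def
  have hseqP : ∀ m, seq m ∈ P := by
    intro m
    induction m with
    | zero => exact hx
    | succ k ih =>
      show B^[k+1] x ∈ P
      rw [Function.iterate_succ_apply']
      exact (hB _ ih).1
  have hseq2 : ∀ m, (seq m).2 = x.2 := by
    intro m
    induction m with
    | zero => rfl
    | succ k ih =>
      show (B^[k+1] x).2 = x.2
      rw [Function.iterate_succ_apply']
      rw [(hB _ (hseqP k)).2.1]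
      exact ih
  have hseq_succ : ∀ m, seq (m + 1) = B (seq m) := by
    intro m
    show B^[m+1] x = B (B^[m] x)
    rw [Function.iterate_succ_apply']
  have hanti : Antitone fun m => gA (seq m) := by
    apply antitone_nat_of_succ_le
    intro m
    rw [hseq_succ]
    exact hle _ (hseqP m)
  obtain ⟨ε, hε, hcoer⟩ := coercive P hpos
  -- the sequence is bounded
  set R : ℝ := Real.sqrt (gA x / ε) with hR_def
  have hbound : ∀ m, seq m ∈ Metric.closedBall (0 : Vsp n × Vsp n) R := by
    intro m
    rw [Metric.mem_closedBall, dist_zero_right]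
    have h1 : ε * ‖seq m‖ ^ 2 ≤ gA (seq m) := hcoer _ (hseqP m)
    have h2 : gA (seq m) ≤ gA x := by
      have := hanti (Nat.zero_le m)
      simpa [hseq_def] using this
    have h3 : ‖seq m‖ ^ 2 ≤ gA x / ε := by
      rw [le_div_iff₀ hε]
      nlinarith
    calc ‖seq m‖ = Real.sqrt (‖seq m‖ ^ 2) := by
          rw [Real.sqrt_sq (norm_nonneg _)]
      _ ≤ R := Real.sqrt_le_sqrt h3
  obtain ⟨q, -, φ, hφ, hconv⟩ :=
    tendsto_subseq_of_bounded Metric.isBounded_closedBall hbound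
  have hqP : q ∈ P :=
    P.closed_of_finiteDimensional.mem_of_tendsto hconv
      (Filter.Eventually.of_forall fun k => hseqP (φ k))
  have hq2 : q.2 = x.2 := by
    have h1 : Filter.Tendsto (fun k => (seq (φ k)).2) Filter.atTop (nhds q.2) :=
      (continuous_snd.tendsto q).comp hconv
    have h2 : Filter.Tendsto (fun k => (seq (φ k)).2) Filter.atTop (nhds x.2) := by
      simp only [hseq2]
      exact tendsto_const_nhds
    exact tendsto_nhds_unique h1 h2
  set c : ℝ := ⨅ m, gA (seq m) with hc_def
  have hbdd : BddBelow (Set.range fun m => gA (seq m)) := by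
    refine ⟨0, ?_⟩
    rintro r ⟨m, rfl⟩
    exact gA_nonneg hpos _ (hseqP m)
  have hc : Filter.Tendsto (fun m => gA (seq m)) Filter.atTop (nhds c) :=
    tendsto_atTop_ciInf hanti hbdd
  have hgq : gA q = c :=
    tendsto_nhds_unique ((continuous_gA.tendsto q).comp hconv)
      (hc.comp hφ.tendsto_atTop)
  have hBcont : Continuous B := B.continuous_of_finiteDimensional
  have hBq : Filter.Tendsto (fun k => seq (φ k + 1)) Filter.atTop (nhds (B q)) := by
    have h1 : Filter.Tendsto (fun k => B (seq (φ k))) Filter.atTop (nhds (B q)) :=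
      (hBcont.tendsto q).comp hconv
    simpa only [← hseq_succ] using h1
  have hφ1 : Filter.Tendsto (fun k => φ k + 1) Filter.atTop Filter.atTop :=
    Filter.tendsto_atTop_mono (fun k => (hφ.id_le k).trans (Nat.le_succ _)) Filter.tendsto_id
  have hgBq : gA (B q) = c :=
    tendsto_nhds_unique ((continuous_gA.tendsto _).comp hBq) (hc.comp hφ1)
  have h0 : gA (q.1, (B q).1) = 0 := by
    have := hdiff q hqP
    rw [hgq, hgBq] at this
    linarith
  have hz : (q.1, (B q).1) = 0 := gA_eq_zero hpos _ (hB q hqP).2.2 h0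
  have hq1 : q.1 = 0 := congrArg Prod.fst hz
  have : q = ((0 : Vsp n), x.2) := Prod.ext hq1 hq2
  rw [← this]
  exact hqP

end Stmt18

lemma mem_relComp {α β γ : Type*} [AddCommGroup α] [Module ℂ α] [AddCommGroup β] [Module ℂ β]
    [AddCommGroup γ] [Module ℂ γ]
    {P : Submodule ℂ (α × β)} {Q : Submodule ℂ (β × γ)} {x : α × γ} :
    x ∈ relComp P Q ↔ ∃ w, (x.1, w) ∈ P ∧ (w, x.2) ∈ Q := Iff.rfl

/-- if `P, Q : V_n ⇉ V_n` are morphisms and `P` is an idempotent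
(`PP = P`), then the product `QP` is an idempotent. -/
theorem relComp_idempotent (n : ℕ) (P Q : Submodule ℂ (Vsp n × Vsp n))
    (hP : IsMorphism P) (hQ : IsMorphism Q) (hPP : relComp P P = P) :
    relComp (relComp P Q) (relComp P Q) = relComp P Q := by
  have hsub : ∀ x ∈ P, ∃ u, (x.1, u) ∈ P ∧ (u, x.2) ∈ P := by
    intro x hx
    rw [← hPP] at hx
    exact hx
  have key0 : ∀ x ∈ P, ((0 : Vsp n), x.2) ∈ P := Stmt18.key P hP.2.2 hsub
  have key1 : ∀ x ∈ P, (x.1, (0 : Vsp n)) ∈ P := by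
    intro x hx
    have h0 := key0 x hx
    have hsub' := P.sub_mem hx h0
    have he : x - ((0 : Vsp n), x.2) = (x.1, (0 : Vsp n)) := by
      apply Prod.ext <;> simp
    rwa [he] at hsub'
  apply le_antisymm
  · rintro ⟨v, y⟩ ⟨z, ⟨w1, hP1, hQ1⟩, ⟨w2, hP2, hQ2⟩⟩
    have h1 : (v, (0 : Vsp n)) ∈ P := key1 (v, w1) hP1
    have h2 : ((0 : Vsp n), w2) ∈ P := key0 (z, w2) hP2
    have h3 : (v, w2) ∈ P := by
      have := P.add_mem h1 h2
      simpa using this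
    exact ⟨w2, h3, hQ2⟩
  · rintro ⟨v, y⟩ ⟨w, h1, h2⟩
    have hv0 : (v, (0 : Vsp n)) ∈ P := key1 (v, w) h1
    have h0w : ((0 : Vsp n), w) ∈ P := key0 (v, w) h1
    refine ⟨0, ⟨(0 : Vsp n), hv0, Q.zero_mem⟩, ⟨w, h0w, h2⟩⟩
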